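/- Let E be a finite directed graph and let E = E₀ → E₁ → ⋯ → E_ℓ be a sequence of graphs in which each E_{i+1} is the source elimination graph of E_i at some source, and such that either E_ℓ is source-free or E_ℓ consists of a single vertex with no edges. Then the order-unit [Σ_{v∈E⁰} v] of the graph monoid M_E has Unbounded Generating Number if and only if either some E_i (0 ≤ i ≤ ℓ) contains an isolated vertex, or E_ℓ contains a source cycle. -/

import Mathlib

variable {V E : Type}

/-- A cycle in the directed graph with edge set `E`, vertex set `V`, and source/range
maps `s r : E → V`: a nonempty list of edges `e₁ ⋯ eₙ` with `r eᵢ = s eᵢ₊₁`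
(indices cyclically, so in particular `r eₙ = s e₁`) whose source vertices are pairwise
distinct. -/
def IsCycle (s r : E → V) (c : List E) : Prop :=
  ∃ h : 0 < c.length,
    (∀ (i : ℕ) (hi : i < c.length),
        r (c.get ⟨i, hi⟩) = s (c.get ⟨(i + 1) % c.length, Nat.mod_lt _ h⟩)) ∧
    (c.map s).Nodup

/-- The defining relations of the graph monoid `M_E` on the free abelian monoid
`V → ℕ` on the vertices: `v = Σ_{e ∈ s⁻¹(v)} r e` for each regular vertex `v`. -/
def graphRel [Fintype E] [DecidableEq V] (s r : E → V) (x y : V → ℕ) : Prop :=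
  ∃ v : V, (∃ e : E, s e = v) ∧ x = Pi.single v 1 ∧
    y = ∑ e : E, if s e = v then Pi.single (r e) 1 else 0

/-- The graph monoid `M_E`: the quotient of the free abelian monoid on the vertices by
the monoid congruence generated by the relations `v = Σ_{e ∈ s⁻¹(v)} r e`. -/
def graphMonoidMk [Fintype E] [DecidableEq V] (s r : E → V) :
    (V → ℕ) →+ (addConGen (graphRel s r)).Quotient :=
  (addConGen (graphRel s r)).mk'

/-- A step-by-step source elimination process, recorded by the vertex sets
`S 0 ⊇ S 1 ⊇ ⋯` of the successive subgraphs: the subgraph with vertex set `S` has edge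
set `{e : s e ∈ S}`, and at each step a source of the current subgraph (a vertex
receiving no edge of the subgraph) is deleted together with the edges it emits. -/
def IsElimSeq [Fintype V] [DecidableEq V] (s r : E → V) (ℓ : ℕ) (S : ℕ → Finset V) : Prop :=
  S 0 = Finset.univ ∧
    ∀ i < ℓ, ∃ v ∈ S i, (¬ ∃ e : E, s e ∈ S i ∧ r e = v) ∧ S (i + 1) = (S i).erase v

/-!
A nonzero graph trace `w : V → ℕ`, i.e. `w v = Σ_{s e = v} w (r e)` at every regular vertex,
induces a homomorphism `M_E → ℕ` that is positive on the order-unit, and this forces UGN. The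
indicator of an isolated vertex of `E_i`, or of the vertices of a source cycle of `E_ℓ`, is a
trace on `E_i`; a trace on `E_{i+1}` extends to `E_i` by prescribing its value at the eliminated
source, so it extends all the way back to `E`.

Conversely, suppose there is neither. Then `E_ℓ` is source-free, so walking backwards from any
vertex `v` of `E_ℓ` runs into a cycle; that cycle is not a source cycle, so it contains a vertex
`u` receiving at least two edges, and `v ≤ u`. With `d_ℓ = Σ_{v ∈ E_ℓ⁰} v`, the relations give
`d_ℓ + Σ_v (|r⁻¹(v)| - 1) v ≤ d_ℓ`, whence `2 d_ℓ ≤ d_ℓ`. Since every eliminated source is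
regular, the order-unit `d` is bounded by a multiple of `d_ℓ`, so `2 d ≤ d`.
-/

open Finset Function

def AlgLE {M : Type*} [AddCommMonoid M] (a b : M) : Prop := ∃ c, a + c = b

local infix:50 " ≼ " => AlgLE

section AlgebraicPreorder

variable {M : Type*} [AddCommMonoid M]

namespace AlgLE

theorem refl (a : M) : a ≼ a := ⟨0, add_zero a⟩

theorem trans {a b c : M} : a ≼ b → b ≼ c → a ≼ c := by
  rintro ⟨x, rfl⟩ ⟨y, rfl⟩
  exact ⟨x + y, (add_assoc a x y).symm⟩

instance : @Trans M M M AlgLE AlgLE AlgLE := ⟨trans⟩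

theorem le_add_right (a b : M) : a ≼ a + b := ⟨b, rfl⟩

theorem zero_le (a : M) : 0 ≼ a := ⟨a, zero_add a⟩

theorem add {a b c d : M} : a ≼ b → c ≼ d → a + c ≼ b + d := by
  rintro ⟨x, rfl⟩ ⟨y, rfl⟩
  exact ⟨x + y, (add_add_add_comm a x c y).symm⟩

theorem nsmul {a b : M} (k : ℕ) : a ≼ b → k • a ≼ k • b := by
  rintro ⟨x, rfl⟩
  exact ⟨k • x, (nsmul_add a x k).symm⟩

theorem le_nsmul (a : M) {k : ℕ} (hk : k ≠ 0) : a ≼ k • a := by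
  obtain ⟨k, rfl⟩ := Nat.exists_eq_add_one_of_ne_zero hk
  rw [succ_nsmul']
  exact le_add_right a _

theorem sum {ι : Type*} {t : Finset ι} {f g : ι → M} (h : ∀ i ∈ t, f i ≼ g i) :
    ∑ i ∈ t, f i ≼ ∑ i ∈ t, g i := by
  classical
  induction t using Finset.induction_on with
  | empty => exact refl 0
  | insert i t hi ih =>
    rw [sum_insert hi, sum_insert hi]
    exact (h i (mem_insert_self i t)).add (ih fun j hj => h j (mem_insert_of_mem hj))

theorem single_le_sum {ι : Type*} {t : Finset ι} (f : ι → M) {i : ι} (hi : i ∈ t) :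
    f i ≼ ∑ j ∈ t, f j := by
  classical
  exact ⟨∑ j ∈ t.erase i, f j, add_sum_erase t f hi⟩

theorem sum_le_sum_of_subset {ι : Type*} {t t' : Finset ι} (f : ι → M) (h : t ⊆ t') :
    ∑ i ∈ t, f i ≼ ∑ i ∈ t', f i := by
  classical
  exact ⟨∑ i ∈ t' \ t, f i, by rw [add_comm, sum_sdiff h]⟩

theorem nsmul_le_of_two_nsmul_le {a : M} (h : 2 • a ≼ a) (k : ℕ) : k • a ≼ a := by
  induction k with
  | zero => rw [zero_nsmul]; exact zero_le a
  | succ k ih =>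
    calc (k + 1) • a = k • a + a := succ_nsmul a k
      _ ≼ a + a := ih.add (refl a)
      _ = 2 • a := (two_nsmul a).symm
      _ ≼ a := h

end AlgLE

/-- Unbounded Generating Number. -/
def HasUGN (d : M) : Prop := ∀ n n' : ℕ, 0 < n → 0 < n' → n • d ≼ n' • d → n ≤ n'

theorem HasUGN.of_addMonoidHom {d : M} (f : M →+ ℕ) (hd : f d ≠ 0) : HasUGN d := by
  rintro n n' - - ⟨z, hz⟩
  have h : n * f d + f z = n' * f d := by simpa using congrArg f hz
  exact Nat.le_of_mul_le_mul_right (h ▸ Nat.le_add_right _ _) (Nat.pos_of_ne_zero hd)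

theorem not_hasUGN_of_two_nsmul_le {d : M} (h : 2 • d ≼ d) : ¬ HasUGN d := fun hd =>
  absurd (hd 2 1 two_pos one_pos (by rwa [one_nsmul])) (by decide)

end AlgebraicPreorder

theorem Function.exists_iterate_mem_periodicPts {α : Type*} [Finite α] (f : α → α) (x : α) :
    ∃ a, f^[a] x ∈ periodicPts f := by
  obtain ⟨a, b, hab, h⟩ := Finite.exists_ne_map_eq_of_infinite fun n => f^[n] x
  wlog hlt : a < b generalizing a b
  · exact this b a hab.symm h.symm (by omega)
  refine ⟨a, mk_mem_periodicPts (n := b - a) (by omega) ?_⟩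
  change f^[b - a] (f^[a] x) = f^[a] x
  rw [← iterate_add_apply, Nat.sub_add_cancel hlt.le]
  exact h.symm

namespace IsCycle

variable {s r : E → V} {c : List E}

theorem range_mem (hc : IsCycle s r c) {e : E} (he : e ∈ c) : r e ∈ c.map s := by
  obtain ⟨hpos, hsucc, -⟩ := hc
  obtain ⟨i, rfl⟩ := List.get_of_mem he
  rw [hsucc i i.2]
  exact List.mem_map_of_mem (List.get_mem _ _)

theorem exists_mem_range_eq (hc : IsCycle s r c) {u : V} (hu : u ∈ c.map s) :
    ∃ e ∈ c, r e = u := by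
  obtain ⟨hpos, hsucc, -⟩ := hc
  obtain ⟨a, ha, rfl⟩ := List.mem_map.mp hu
  obtain ⟨⟨j, hj⟩, rfl⟩ := List.get_of_mem ha
  obtain ⟨i, hi, hij⟩ : ∃ i < c.length, (i + 1) % c.length = j := by
    rcases Nat.eq_zero_or_pos j with rfl | hj0
    · exact ⟨c.length - 1, by omega, by rw [Nat.sub_add_cancel hpos, Nat.mod_self]⟩
    · exact ⟨j - 1, by omega, by rw [Nat.sub_add_cancel hj0, Nat.mod_eq_of_lt hj]⟩
  refine ⟨c.get ⟨i, hi⟩, List.get_mem _ _, ?_⟩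
  rw [hsucc i hi]
  simp only [hij]

theorem injOn_source (hc : IsCycle s r c) {e e' : E} (he : e ∈ c) (he' : e' ∈ c)
    (h : s e = s e') : e = e' :=
  List.inj_on_of_nodup_map hc.2.2 he he' h

end IsCycle

theorem exists_isCycle_of_mem_periodicPts {s r : E → V} {ed : V → E} {x : V}
    (hx : x ∈ periodicPts (s ∘ ed))
    (hr : ∀ k, r (ed ((s ∘ ed)^[k] x)) = (s ∘ ed)^[k] x) :
    ∃ c, IsCycle s r c ∧ ∀ e ∈ c, ∃ k, e = ed ((s ∘ ed)^[k] x) := by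
  set p := s ∘ ed
  set n := minimalPeriod p x
  have hn : 0 < n := minimalPeriod_pos_of_mem_periodicPts hx
  -- the `k`-th edge runs from `p^[n-k] x` to `p^[n-1-k] x`
  refine ⟨List.ofFn fun k : Fin n => ed (p^[n - 1 - k] x), ⟨by simpa using hn, ?_, ?_⟩, ?_⟩
  · intro i hi
    simp only [List.length_ofFn] at hi
    simp only [List.get_eq_getElem, List.getElem_ofFn, List.length_ofFn, hr]
    change _ = p (p^[n - 1 - (i + 1) % n] x)
    rw [← iterate_succ_apply' p]
    rcases Nat.lt_or_ge (i + 1) n with h | h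
    · rw [Nat.mod_eq_of_lt h]
      congr 1
      omega
    · rw [show i + 1 = n by omega, Nat.mod_self, show n - 1 - i = 0 by omega,
        show (n - 1 - 0).succ = n by omega, iterate_minimalPeriod]
      rfl
  · rw [List.map_ofFn, List.nodup_ofFn]
    intro k k' h
    have hinj := iterate_injOn_Iio_minimalPeriod (f := p) (x := p x)
    rw [minimalPeriod_apply hx] at hinj
    change p (p^[n - 1 - k] x) = p (p^[n - 1 - k'] x) at h
    simp only [← iterate_succ_apply' p, iterate_succ_apply] at h
    have := hinj (Set.mem_Iio.mpr (by omega)) (Set.mem_Iio.mpr (by omega)) h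
    exact Fin.ext (by omega)
  · intro e he
    obtain ⟨k, rfl⟩ := List.mem_ofFn.mp he
    exact ⟨_, rfl⟩

section GraphMonoid

variable [Fintype E] [DecidableEq V] (s r : E → V)

def vertexClass (v : V) : (addConGen (graphRel s r)).Quotient :=
  graphMonoidMk s r (Pi.single v 1)

def inDeg (T : Finset V) (v : V) : ℕ :=
  (Finset.univ.filter fun e : E => s e ∈ T ∧ r e = v).card

def IsIsolatedIn (T : Finset V) (v : V) : Prop :=
  v ∈ T ∧ (¬ ∃ e : E, s e ∈ T ∧ s e = v) ∧ ¬ ∃ e : E, s e ∈ T ∧ r e = v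

def IsSourceCycleIn (T : Finset V) (c : List E) : Prop :=
  IsCycle s r c ∧ (∀ e ∈ c, s e ∈ T) ∧ ∀ u ∈ c.map s, inDeg s r T u = 1

theorem vertexClass_eq_sum {v : V} (hv : ∃ e, s e = v) :
    vertexClass s r v = ∑ e ∈ univ.filter (s · = v), vertexClass s r (r e) := by
  have h : vertexClass s r v =
      graphMonoidMk s r (∑ e : E, if s e = v then Pi.single (r e) 1 else 0) :=
    (AddCon.eq _).mpr (AddConGen.Rel.of _ _ ⟨v, hv, rfl, rfl⟩)
  rw [h, map_sum, sum_filter]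
  refine sum_congr rfl fun e _ => ?_
  split_ifs <;> simp [vertexClass]

theorem sum_vertexClass_range_le (v : V) :
    ∑ e ∈ univ.filter (s · = v), vertexClass s r (r e) ≼ vertexClass s r v := by
  by_cases hv : ∃ e, s e = v
  · rw [← vertexClass_eq_sum s r hv]
    exact AlgLE.refl _
  · rw [sum_eq_zero fun e he => absurd ⟨e, (mem_filter.mp he).2⟩ hv]
    exact AlgLE.zero_le _

theorem vertexClass_range_le_source (e : E) :
    vertexClass s r (r e) ≼ vertexClass s r (s e) :=
  (AlgLE.single_le_sum (t := univ.filter (s · = s e)) (fun e => vertexClass s r (r e))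
    (mem_filter.mpr ⟨mem_univ e, rfl⟩)).trans
    (sum_vertexClass_range_le s r (s e))

variable {s r} in
theorem sum_inDeg_nsmul_vertexClass_le {T : Finset V} (hT : ∀ e, s e ∈ T → r e ∈ T) :
    ∑ v ∈ T, inDeg s r T v • vertexClass s r v ≼ ∑ v ∈ T, vertexClass s r v :=
  calc ∑ v ∈ T, inDeg s r T v • vertexClass s r v
      = ∑ e ∈ univ.filter (s · ∈ T), vertexClass s r (r e) := by
        rw [← sum_fiberwise_of_maps_to' (g := r) (t := T) fun e he => hT e (mem_filter.mp he).2]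
        refine sum_congr rfl fun v _ => ?_
        rw [sum_const, filter_filter]
        rfl
    _ = ∑ v ∈ T, ∑ e ∈ univ.filter (s · = v), vertexClass s r (r e) :=
        (sum_fiberwise_eq_sum_filter _ _ _ _).symm
    _ ≼ ∑ v ∈ T, vertexClass s r v := AlgLE.sum fun v _ => sum_vertexClass_range_le s r v

variable {s r} in
theorem inDeg_pos {T : Finset V} (hsf : ∀ v ∈ T, ∃ e, s e ∈ T ∧ r e = v) {v : V} (hv : v ∈ T) :
    0 < inDeg s r T v := by
  obtain ⟨e, he, hre⟩ := hsf v hv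
  exact card_pos.mpr ⟨e, mem_filter.mpr ⟨mem_univ e, he, hre⟩⟩

end GraphMonoid

section GraphTrace

variable [Fintype E] [DecidableEq V]

def IsGraphTraceOn (s r : E → V) (T : Finset V) (w : V → ℕ) : Prop :=
  ∀ v ∈ T, (∃ e, s e = v) → w v = ∑ e ∈ univ.filter (s · = v), w (r e)

variable {s r : E → V} {T : Finset V}

theorem IsGraphTraceOn.update_of_source {v₀ : V} {w : V → ℕ}
    (hw : IsGraphTraceOn s r (T.erase v₀) w) (hsrc : ¬ ∃ e, s e ∈ T ∧ r e = v₀) :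
    IsGraphTraceOn s r T (update w v₀ (∑ e ∈ univ.filter (s · = v₀), w (r e))) := by
  intro v hv hreg
  have hrange : ∀ e ∈ univ.filter (s · = v), update w v₀ (∑ e ∈ univ.filter (s · = v₀), w (r e))
      (r e) = w (r e) := fun e he =>
    update_of_ne (fun h => hsrc ⟨e, (mem_filter.mp he).2 ▸ hv, h⟩) _ _
  rw [sum_congr rfl hrange]
  by_cases h : v = v₀
  · subst h
    exact update_self ..
  · rw [update_of_ne h]
    exact hw v (mem_erase.mpr ⟨h, hv⟩) hreg

theorem IsIsolatedIn.isGraphTraceOn_single {v : V} (hv : IsIsolatedIn s r T v) :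
    IsGraphTraceOn s r T (Pi.single v 1) := by
  obtain ⟨-, hout, hin⟩ := hv
  rintro u hu ⟨e, he⟩
  have huv : u ≠ v := by
    rintro rfl
    exact hout ⟨e, he ▸ hu, he⟩
  rw [Pi.single_eq_of_ne huv, eq_comm]
  exact sum_eq_zero fun e' he' =>
    Pi.single_eq_of_ne (fun h => hin ⟨e', (mem_filter.mp he').2 ▸ hu, h⟩) _

theorem IsSourceCycleIn.mem_of_range_mem {c : List E} (hc : IsSourceCycleIn s r T c) {e : E}
    (he : s e ∈ T) (hre : r e ∈ c.map s) : e ∈ c := by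
  obtain ⟨hcyc, hcT, hdeg⟩ := hc
  obtain ⟨e', he'c, hre'⟩ := hcyc.exists_mem_range_eq hre
  have hle : (univ.filter fun e'' : E => s e'' ∈ T ∧ r e'' = r e).card ≤ 1 := (hdeg _ hre).le
  rwa [card_le_one.mp hle e (mem_filter.mpr ⟨mem_univ e, he, rfl⟩) e'
    (mem_filter.mpr ⟨mem_univ e', hcT e' he'c, hre'⟩)]

theorem IsSourceCycleIn.isGraphTraceOn_indicator {c : List E}
    (hc : IsSourceCycleIn s r T c) :
    IsGraphTraceOn s r T (fun u => if u ∈ c.map s then 1 else 0) := by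
  classical
  intro u hu _
  rw [sum_boole, filter_filter, Nat.cast_id]
  have hedges : univ.filter (fun e => s e = u ∧ r e ∈ c.map s) =
      univ.filter (fun e => e ∈ c ∧ s e = u) := by
    ext e
    simp only [mem_filter, mem_univ, true_and]
    constructor
    · rintro ⟨rfl, h⟩
      exact ⟨hc.mem_of_range_mem hu h, rfl⟩
    · rintro ⟨h, rfl⟩
      exact ⟨rfl, hc.1.range_mem h⟩
  rw [hedges, eq_comm]
  beta_reduce
  split_ifs with h
  · obtain ⟨a, ha, rfl⟩ := List.mem_map.mp h
    refine card_eq_one.mpr ⟨a, ext fun e => ?_⟩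
    simp only [mem_filter, mem_univ, true_and, mem_singleton]
    exact ⟨fun ⟨he, hs⟩ => hc.1.injOn_source he ha hs, by rintro rfl; exact ⟨ha, rfl⟩⟩
  · refine card_eq_zero.mpr (filter_eq_empty_iff.mpr ?_)
    rintro e - ⟨he, rfl⟩
    exact h (List.mem_map_of_mem he)

variable [Fintype V] {w : V → ℕ}

def IsGraphTraceOn.lift (hw : IsGraphTraceOn s r univ w) :
    (addConGen (graphRel s r)).Quotient →+ ℕ :=
  (addConGen (graphRel s r)).lift
    { toFun := (· ⬝ᵥ w)
      map_zero' := zero_dotProduct w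
      map_add' := fun x y => add_dotProduct x y w }
    (AddCon.addConGen_le.mpr <| by
      rintro _ _ ⟨v, hv, rfl, rfl⟩
      change _ ⬝ᵥ w = _ ⬝ᵥ w
      rw [single_dotProduct, one_mul, hw v (mem_univ v) hv, sum_dotProduct, sum_filter]
      refine sum_congr rfl fun e _ => ?_
      split_ifs <;> simp [single_dotProduct])

theorem IsGraphTraceOn.lift_graphMonoidMk (hw : IsGraphTraceOn s r univ w) (x : V → ℕ) :
    hw.lift (graphMonoidMk s r x) = x ⬝ᵥ w :=
  rfl

theorem IsGraphTraceOn.hasUGN (hw : IsGraphTraceOn s r univ w) {u : V} (hu : w u ≠ 0) :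
    HasUGN (graphMonoidMk s r (∑ v, Pi.single v 1)) := by
  refine HasUGN.of_addMonoidHom hw.lift ?_
  simp only [hw.lift_graphMonoidMk, sum_dotProduct, single_dotProduct, one_mul]
  exact fun h => hu (sum_eq_zero_iff.mp h u (mem_univ u))

end GraphTrace

section SourceFree

variable [Fintype V] [Fintype E] [DecidableEq V] {s r : E → V} {T : Finset V}

theorem exists_two_le_inDeg (hsf : ∀ v ∈ T, ∃ e, s e ∈ T ∧ r e = v)
    (hnsc : ¬ ∃ c, IsSourceCycleIn s r T c) {v : V} (hv : v ∈ T) :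
    ∃ u ∈ T, 2 ≤ inDeg s r T u ∧ vertexClass s r v ≼ vertexClass s r u := by
  obtain ⟨e₀, -⟩ := hsf v hv
  have hpos : ∀ {u}, u ∈ T → 0 < inDeg s r T u := inDeg_pos hsf
  have : Nonempty E := ⟨e₀⟩
  choose! ed hedT hedr using hsf
  set p := s ∘ ed
  have hwalk : ∀ k, p^[k] v ∈ T ∧ vertexClass s r v ≼ vertexClass s r (p^[k] v) := by
    intro k
    induction k with
    | zero => exact ⟨hv, AlgLE.refl _⟩
    | succ k ih =>
      rw [iterate_succ_apply']
      refine ⟨hedT _ ih.1, ih.2.trans ?_⟩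
      have h := vertexClass_range_le_source s r (ed (p^[k] v))
      rwa [hedr _ ih.1] at h
  obtain ⟨a, ha⟩ := exists_iterate_mem_periodicPts p v
  have hwalk' : ∀ k, p^[k] (p^[a] v) ∈ T ∧
      vertexClass s r v ≼ vertexClass s r (p^[k] (p^[a] v)) := fun k => by
    rw [← iterate_add_apply]
    exact hwalk _
  obtain ⟨c, hc, hced⟩ := exists_isCycle_of_mem_periodicPts ha fun k => hedr _ (hwalk' k).1
  have hcT : ∀ e ∈ c, s e ∈ T := fun e he => by
    obtain ⟨k, rfl⟩ := hced e he
    exact hedT _ (hwalk' k).1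
  obtain ⟨u, hu, hdeg⟩ : ∃ u ∈ c.map s, inDeg s r T u ≠ 1 := by
    by_contra! h
    exact hnsc ⟨c, hc, hcT, h⟩
  obtain ⟨e, he, rfl⟩ := List.mem_map.mp hu
  obtain ⟨k, rfl⟩ := hced e he
  have hT := (hwalk' (k + 1)).1
  rw [iterate_succ_apply'] at hT
  have hpos := hpos hT
  change inDeg s r T (p (p^[k] (p^[a] v))) ≠ 1 at hdeg
  refine ⟨_, hT, by omega, ?_⟩
  simpa only [iterate_succ_apply'] using (hwalk' (k + 1)).2

theorem two_nsmul_sum_vertexClass_le (hT : ∀ e, s e ∈ T → r e ∈ T)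
    (hsf : ∀ v ∈ T, ∃ e, s e ∈ T ∧ r e = v) (hnsc : ¬ ∃ c, IsSourceCycleIn s r T c) :
    2 • ∑ v ∈ T, vertexClass s r v ≼ ∑ v ∈ T, vertexClass s r v := by
  set d := ∑ v ∈ T, vertexClass s r v
  set x := ∑ v ∈ T, (inDeg s r T v - 1) • vertexClass s r v
  have hdx : d + x ≼ d :=
    calc d + x = ∑ v ∈ T, inDeg s r T v • vertexClass s r v := by
          rw [← sum_add_distrib]
          refine sum_congr rfl fun v hv => ?_
          obtain ⟨k, hk⟩ := Nat.exists_eq_add_of_le' (inDeg_pos hsf hv)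
          rw [hk, Nat.add_sub_cancel, succ_nsmul']
      _ ≼ d := sum_inDeg_nsmul_vertexClass_le hT
  have hdkx : ∀ k : ℕ, d + k • x ≼ d := by
    intro k
    induction k with
    | zero => rw [zero_nsmul, add_zero]; exact AlgLE.refl d
    | succ k ih =>
      calc d + (k + 1) • x = (d + x) + k • x := by rw [succ_nsmul', add_assoc]
        _ ≼ d + k • x := hdx.add (AlgLE.refl _)
        _ ≼ d := ih
  have hvx : ∀ v ∈ T, vertexClass s r v ≼ x := fun v hv => by
    obtain ⟨u, hu, hdeg, hvu⟩ := exists_two_le_inDeg hsf hnsc hv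
    exact hvu.trans ((AlgLE.le_nsmul _ (by omega)).trans
      (AlgLE.single_le_sum (fun v => (inDeg s r T v - 1) • vertexClass s r v) hu))
  calc 2 • d = d + d := two_nsmul d
    _ ≼ d + #T • x := (AlgLE.refl d).add (by simpa only [sum_const] using AlgLE.sum hvx)
    _ ≼ d := hdkx _

end SourceFree

theorem sum_vertexClass_le_nsmul_sum_erase [Fintype E] [DecidableEq V] {s r : E → V}
    {T : Finset V} {v₀ : V} (hv₀ : v₀ ∈ T) (hreg : ∃ e, s e = v₀)
    (hrange : ∀ e, s e = v₀ → r e ∈ T.erase v₀) :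
    ∑ v ∈ T, vertexClass s r v ≼
      (#(univ.filter (s · = v₀)) + 1) • ∑ v ∈ T.erase v₀, vertexClass s r v := by
  rw [← add_sum_erase T _ hv₀, succ_nsmul]
  refine AlgLE.add ?_ (AlgLE.refl _)
  rw [vertexClass_eq_sum s r hreg, ← sum_const]
  exact AlgLE.sum fun e he => AlgLE.single_le_sum _ (hrange e (mem_filter.mp he).2)

namespace IsElimSeq

variable [Fintype V] [DecidableEq V] {s r : E → V} {ℓ : ℕ} {S : ℕ → Finset V}

theorem range_mem (hseq : IsElimSeq s r ℓ S) {i : ℕ} (hi : i ≤ ℓ) {e : E} (he : s e ∈ S i) :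
    r e ∈ S i := by
  induction i with
  | zero =>
    rw [hseq.1]
    exact mem_univ _
  | succ i ih =>
    obtain ⟨v, -, hsrc, hS⟩ := hseq.2 i (by omega)
    rw [hS] at he ⊢
    exact mem_erase.mpr ⟨fun h => hsrc ⟨e, mem_of_mem_erase he, h⟩,
      ih (by omega) (mem_of_mem_erase he)⟩

variable [Fintype E]

theorem exists_isGraphTraceOn_univ (hseq : IsElimSeq s r ℓ S) {i : ℕ} (hi : i ≤ ℓ)
    {w : V → ℕ} (hw : IsGraphTraceOn s r (S i) w) :
    ∃ w', IsGraphTraceOn s r univ w' ∧ ∀ v ∈ S i, w' v = w v := by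
  induction i generalizing w with
  | zero => exact ⟨w, hseq.1 ▸ hw, fun _ _ => rfl⟩
  | succ i ih =>
    obtain ⟨v₀, -, hsrc, hS⟩ := hseq.2 i (by omega)
    rw [hS] at hw
    obtain ⟨w', hw', hagree⟩ := ih (by omega) (hw.update_of_source hsrc)
    refine ⟨w', hw', fun v hv => ?_⟩
    rw [hS] at hv
    rw [hagree v (mem_of_mem_erase hv), update_of_ne (ne_of_mem_erase hv)]

theorem exists_sum_le_nsmul_sum (hseq : IsElimSeq s r ℓ S)
    (hreg : ∀ i < ℓ, ∀ v ∈ S i, (¬ ∃ e, s e ∈ S i ∧ r e = v) → ∃ e, s e = v)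
    {i : ℕ} (hi : i ≤ ℓ) :
    ∃ K : ℕ, ∑ v, vertexClass s r v ≼ K • ∑ v ∈ S i, vertexClass s r v := by
  induction i with
  | zero =>
    refine ⟨1, ?_⟩
    rw [one_nsmul, hseq.1]
    exact AlgLE.refl _
  | succ i ih =>
    obtain ⟨K, hK⟩ := ih (by omega)
    obtain ⟨v₀, hv₀, hsrc, hS⟩ := hseq.2 i (by omega)
    have hrange : ∀ e, s e = v₀ → r e ∈ (S i).erase v₀ := fun e he =>
      mem_erase.mpr ⟨fun h => hsrc ⟨e, he ▸ hv₀, h⟩, hseq.range_mem (by omega) (he ▸ hv₀)⟩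
    refine ⟨(#(univ.filter (s · = v₀)) + 1) * K, ?_⟩
    rw [hS, mul_nsmul]
    exact hK.trans (AlgLE.nsmul K (sum_vertexClass_le_nsmul_sum_erase hv₀
      (hreg i (by omega) v₀ hv₀ hsrc) hrange))

theorem not_hasUGN (hseq : IsElimSeq s r ℓ S)
    (hreg : ∀ i < ℓ, ∀ v ∈ S i, (¬ ∃ e, s e ∈ S i ∧ r e = v) → ∃ e, s e = v)
    (hsf : ∀ v ∈ S ℓ, ∃ e, s e ∈ S ℓ ∧ r e = v) (hnsc : ¬ ∃ c, IsSourceCycleIn s r (S ℓ) c) :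
    ¬ HasUGN (graphMonoidMk s r (∑ v, Pi.single v 1)) := by
  obtain ⟨K, hK⟩ := hseq.exists_sum_le_nsmul_sum hreg le_rfl
  have h2 := two_nsmul_sum_vertexClass_le (fun e => hseq.range_mem le_rfl) hsf hnsc
  refine not_hasUGN_of_two_nsmul_le ?_
  rw [map_sum]
  calc 2 • ∑ v, vertexClass s r v ≼ (2 * K) • ∑ v ∈ S ℓ, vertexClass s r v := by
        rw [mul_nsmul']
        exact hK.nsmul 2
    _ ≼ ∑ v ∈ S ℓ, vertexClass s r v := AlgLE.nsmul_le_of_two_nsmul_le h2 _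
    _ ≼ ∑ v, vertexClass s r v := AlgLE.sum_le_sum_of_subset _ (subset_univ _)

end IsElimSeq

/-- Let `E` be a finite directed graph and
`E = E₀ → E₁ → ⋯ → E_ℓ` a sequence of source eliminations such that `E_ℓ` is source-free
or `E_ℓ` is a single vertex with no edges.  Then the order-unit `[Σ_{v ∈ E⁰} v]` of the
graph monoid `M_E` has Unbounded Generating Number (for positive `n, n'`,
`n • d ≤ n' • d → n ≤ n'`, where `x ≤ y` iff `∃ z, x + z = y`) if and only if either
some `E_i` (`0 ≤ i ≤ ℓ`) contains an isolated vertex, or `E_ℓ` contains a source cycle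
(a cycle all of whose edges lie in `E_ℓ` and each of whose vertices receives exactly one
edge of `E_ℓ`). -/
theorem stmt_13 [Fintype V] [Fintype E] [DecidableEq V]
    (s r : E → V) (ℓ : ℕ) (S : ℕ → Finset V)
    (hseq : IsElimSeq s r ℓ S)
    (hend : (∀ v ∈ S ℓ, ∃ e : E, s e ∈ S ℓ ∧ r e = v) ∨
      (∃ v : V, S ℓ = {v} ∧ ¬ ∃ e : E, s e ∈ S ℓ)) :
    ((∀ n n' : ℕ, 0 < n → 0 < n' →
        (∃ z, n • graphMonoidMk s r (∑ v : V, Pi.single v 1) + z =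
            n' • graphMonoidMk s r (∑ v : V, Pi.single v 1)) →
          n ≤ n') ↔
      ((∃ i ≤ ℓ, ∃ v ∈ S i,
          (¬ ∃ e : E, s e ∈ S i ∧ s e = v) ∧ ¬ ∃ e : E, s e ∈ S i ∧ r e = v) ∨
        (∃ c : List E, IsCycle s r c ∧ (∀ e ∈ c, s e ∈ S ℓ) ∧
          ∀ u ∈ c.map s,
            (Finset.univ.filter fun e : E => s e ∈ S ℓ ∧ r e = u).card = 1))) := by
  change HasUGN _ ↔ (∃ i ≤ ℓ, ∃ v, IsIsolatedIn s r (S i) v) ∨ ∃ c, IsSourceCycleIn s r (S ℓ) c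
  constructor
  · intro hugn
    by_contra h
    obtain ⟨hiso, hnsc⟩ := not_or.mp h
    refine hseq.not_hasUGN (fun i hi v hv hsrc => ?_) (hend.resolve_right ?_) hnsc hugn
    · by_contra! hout
      exact hiso ⟨i, hi.le, v, hv, fun ⟨e, _, he⟩ => hout e he, hsrc⟩
    · rintro ⟨v, hSv, hnoedge⟩
      exact hiso ⟨ℓ, le_rfl, v, hSv ▸ mem_singleton_self v, fun ⟨e, he, _⟩ => hnoedge ⟨e, he⟩,
        fun ⟨e, he, _⟩ => hnoedge ⟨e, he⟩⟩
  · rintro (⟨i, hi, v, hv⟩ | ⟨c, hc⟩)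
    · obtain ⟨w, hw, hwv⟩ := hseq.exists_isGraphTraceOn_univ hi hv.isGraphTraceOn_single
      exact hw.hasUGN (u := v) (by simp [hwv v hv.1])
    · obtain ⟨w, hw, hwc⟩ := hseq.exists_isGraphTraceOn_univ le_rfl hc.isGraphTraceOn_indicator
      obtain ⟨e, he⟩ := List.exists_mem_of_length_pos hc.1.1
      refine hw.hasUGN (u := s e) ?_
      rw [hwc _ (hc.2.1 e he), if_pos (List.mem_map_of_mem he)]
      exact one_ne_zero
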